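/- arXiv:1806.00618 — 4 statements merged into one kernel-verified Lean document; each statement's English description precedes it below -/
import Mathlib

section
/- Let x ∈ [0,1) be irrational with continued fraction expansion x = [a₁, a₂, ...], convergents pₙ/qₙ, complete quotient θ_{n+1} = [a_{n+1}, a_{n+2}, ...] and reversed quotient φₙ = [aₙ, a_{n−1}, ..., a₁]. Then (1 + θ_{n+1}·φₙ)^{−1} = qₙ·|q_{n−1}·x − p_{n−1}| for all n ≥ 1. -/
open Set MeasureTheory Filter

/-- The Gauss map `T(x) = 1/x - ⌊1/x⌋` (with `T 0 = 0`). -/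
noncomputable def gaussMap (x : ℝ) : ℝ := Int.fract x⁻¹

/-- The `n`-th partial quotient `aₙ(x)` (indexed from `n = 1`). -/
noncomputable def cfA (x : ℝ) (n : ℕ) : ℕ := ⌊(gaussMap^[n - 1] x)⁻¹⌋₊

/-- Numerators `pₙ` of the convergents of `[b 1, b 2, ...]`:
`p₀ = 0`, `p₁ = 1` (since `p₋₁ = 1`), `p_{n+2} = b (n+2) p_{n+1} + pₙ`. -/
def cfP (b : ℕ → ℕ) : ℕ → ℕ
  | 0 => 0
  | 1 => 1
  | n + 2 => b (n + 2) * cfP b (n + 1) + cfP b n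

/-- Denominators (continuants) `qₙ` of the convergents of `[b 1, b 2, ...]`:
`q₀ = 1`, `q₁ = b 1`, `q_{n+2} = b (n+2) q_{n+1} + qₙ`. -/
def cfQ (b : ℕ → ℕ) : ℕ → ℕ
  | 0 => 1
  | 1 => b 1
  | n + 2 => b (n + 2) * cfQ b (n + 1) + cfQ b n

/-- The cylinder `Iₙ(b 1, ..., b n)` of order `n`. -/
noncomputable def cfCyl (b : ℕ → ℕ) (n : ℕ) : Set ℝ :=
  {x ∈ Set.Ico (0 : ℝ) 1 | ∀ i, 1 ≤ i → i ≤ n → cfA x i = b i}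

/-! Reversing the partial quotients does not change a continuant, so `φₙ = q_{n-1} / qₙ` and
`1 + θ_{n+1} φₙ = (qₙ + θ_{n+1} q_{n-1}) / qₙ`. On the other hand
`x = (pₙ + θ_{n+1} p_{n-1}) / (qₙ + θ_{n+1} q_{n-1})`, which together with
`pₙ q_{n-1} - p_{n-1} qₙ = ±1` gives `|q_{n-1} x - p_{n-1}| = 1 / (qₙ + θ_{n+1} q_{n-1})`. -/

section Continuants

variable (b : ℕ → ℕ)

theorem cfQ_add_two_eq_left (n : ℕ) :
    cfQ b (n + 2) = b 1 * cfQ (fun i => b (i + 1)) (n + 1) + cfQ (fun i => b (i + 2)) n := by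
  induction n using Nat.twoStepInduction with
  | zero => simp only [cfQ]; ring
  | one => simp only [cfQ]; ring
  | more m ih₀ ih₁ =>
    rw [cfQ.eq_3 b (m + 2), ih₀, ih₁, cfQ.eq_3 _ (m + 1), cfQ.eq_3 _ m, cfQ.eq_3 _ m]
    ring

theorem cfQ_reverse (n : ℕ) : cfQ (fun i => b (n + 1 - i)) n = cfQ b n := by
  induction n using Nat.twoStepInduction generalizing b with
  | zero => rfl
  | one => rfl
  | more m ih₀ ih₁ =>
    rw [cfQ_add_two_eq_left, cfQ, ← ih₀ b, ← ih₁ b]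
    simp only [show m + 2 + 1 - 1 = m + 2 by omega]
    congr 3 <;> funext i <;> congr 1 <;> omega

theorem cfP_succ_eq_cfQ_tail (n : ℕ) : cfP b (n + 1) = cfQ (fun i => b (i + 1)) n := by
  induction n using Nat.twoStepInduction with
  | zero => rfl
  | one => simp [cfP, cfQ]
  | more m ih₀ ih₁ => rw [cfP, ih₀, ih₁, cfQ]

theorem cfP_reverse (n : ℕ) : cfP (fun i => b (n + 1 + 1 - i)) (n + 1) = cfQ b n := by
  rw [cfP_succ_eq_cfQ_tail, ← cfQ_reverse b n]
  congr 1
  funext i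
  congr 1
  omega

theorem cfQ_pos (hb : 0 < b 1) (n : ℕ) : 0 < cfQ b n := by
  induction n using Nat.twoStepInduction with
  | zero => exact Nat.one_pos
  | one => exact hb
  | more m ih₀ _ => rw [cfQ]; omega

theorem cfP_mul_cfQ_sub_cfP_mul_cfQ {R : Type*} [CommRing R] (m : ℕ) :
    (cfP b (m + 1) : R) * cfQ b m - cfP b m * cfQ b (m + 1) = (-1) ^ m := by
  induction m with
  | zero => simp [cfP, cfQ]
  | succ k ih =>
    rw [cfP, cfQ]
    push_cast
    linear_combination (-1 : R) * ih

variable {b}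

theorem mul_cfQ_add_eq_cfP_add (θ : ℕ → ℝ) (hθ : ∀ k, θ k ≠ 0)
    (hstep : ∀ k, θ (k + 1) = (θ k)⁻¹ - b (k + 1)) (m : ℕ) :
    θ 0 * (cfQ b (m + 1) + θ (m + 1) * cfQ b m) = cfP b (m + 1) + θ (m + 1) * cfP b m := by
  induction m with
  | zero =>
    rw [hstep, cfQ, cfQ, cfP, cfP]
    field_simp [hθ 0]
    ring
  | succ k ih =>
    have hinv := inv_mul_cancel₀ (hθ (k + 1))
    refine mul_right_cancel₀ (hθ (k + 1)) ?_
    rw [hstep (k + 1), cfQ, cfP]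
    push_cast
    linear_combination ih + (θ 0 * cfQ b (k + 1) - cfP b (k + 1)) * hinv

theorem cfQ_mul_sub_cfP_mul_cfQ_add (θ : ℕ → ℝ) (hθ : ∀ k, θ k ≠ 0)
    (hstep : ∀ k, θ (k + 1) = (θ k)⁻¹ - b (k + 1)) (m : ℕ) :
    (cfQ b m * θ 0 - cfP b m) * (cfQ b (m + 1) + θ (m + 1) * cfQ b m) = (-1) ^ m := by
  linear_combination cfQ b m * mul_cfQ_add_eq_cfP_add θ hθ hstep m +
    cfP_mul_cfQ_sub_cfP_mul_cfQ b (R := ℝ) m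

end Continuants

section GaussMap

theorem gaussMap_eq_inv_sub_floor {y : ℝ} (hy : 0 ≤ y) : gaussMap y = y⁻¹ - ⌊y⁻¹⌋₊ := by
  rw [gaussMap, Int.fract, ← Int.natCast_floor_eq_floor (inv_nonneg.mpr hy)]
  rfl

theorem irrational_gaussMap {x : ℝ} (hx : Irrational x) : Irrational (gaussMap x) :=
  hx.inv.sub_intCast _

theorem irrational_gaussMap_iterate {x : ℝ} (hx : Irrational x) (k : ℕ) :
    Irrational (gaussMap^[k] x) := by
  induction k with
  | zero => exact hx
  | succ k ih => rw [Function.iterate_succ_apply']; exact irrational_gaussMap ih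

theorem gaussMap_nonneg (y : ℝ) : 0 ≤ gaussMap y := Int.fract_nonneg _

theorem gaussMap_iterate_nonneg {x : ℝ} (hx : 0 ≤ x) (k : ℕ) : 0 ≤ gaussMap^[k] x := by
  cases k with
  | zero => exact hx
  | succ k => rw [Function.iterate_succ_apply']; exact gaussMap_nonneg _

theorem gaussMap_iterate_succ {x : ℝ} (hx : 0 ≤ x) (k : ℕ) :
    gaussMap^[k + 1] x = (gaussMap^[k] x)⁻¹ - cfA x (k + 1) := by
  rw [Function.iterate_succ_apply', gaussMap_eq_inv_sub_floor (gaussMap_iterate_nonneg hx k)]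
  rfl

theorem cfA_one_pos {x : ℝ} (hx : x ∈ Set.Ioc (0 : ℝ) 1) : 0 < cfA x 1 :=
  Nat.floor_pos.mpr (one_le_inv₀ hx.1 |>.mpr hx.2)

end GaussMap

/-- Cassels identity: `(1 + θ_{n+1} φₙ)⁻¹ = qₙ |q_{n-1} x - p_{n-1}|`. -/
theorem cassels_identity (x : ℝ) (hx : x ∈ Set.Ico (0 : ℝ) 1) (hirr : Irrational x)
    (n : ℕ) (hn : 1 ≤ n) :
    (1 + gaussMap^[n] x *
        ((cfP (fun i => cfA x (n + 1 - i)) n : ℝ) / (cfQ (fun i => cfA x (n + 1 - i)) n)))⁻¹ =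
      (cfQ (cfA x) n : ℝ) * |(cfQ (cfA x) (n - 1) : ℝ) * x - (cfP (cfA x) (n - 1) : ℝ)| := by
  obtain ⟨m, rfl⟩ := Nat.exists_eq_add_of_le' hn
  rw [Nat.add_sub_cancel, cfQ_reverse, cfP_reverse]
  have hirr_iter := irrational_gaussMap_iterate hirr
  have hdet := cfQ_mul_sub_cfP_mul_cfQ_add (fun k => gaussMap^[k] x)
    (fun k => (hirr_iter k).ne_zero) (gaussMap_iterate_succ hx.1) m
  simp only [Function.iterate_zero, id_eq] at hdet
  set t := gaussMap^[m + 1] x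
  have ht : 0 < t := (gaussMap_iterate_nonneg hx.1 _).lt_of_ne' (hirr_iter _).ne_zero
  have hq : (0 : ℝ) < cfQ (cfA x) (m + 1) :=
    mod_cast cfQ_pos _ (cfA_one_pos ⟨hx.1.lt_of_ne' hirr.ne_zero, hx.2.le⟩) _
  have hD : (0 : ℝ) < cfQ (cfA x) (m + 1) + t * cfQ (cfA x) m := by positivity
  rw [eq_div_of_mul_eq hD.ne' hdet, abs_div, abs_pow, abs_neg, abs_one, one_pow, abs_of_pos hD]
  field_simp
end

section
/- Let Ψ : [1,∞) → ℝ₊ be non-decreasing, s ∈ (0,1), and suppose ∑_{t≥1} t·(1/(t²Ψ(t)))^s < ∞. Then H^s(K(Ψ)) = 0, where K(Ψ) = {x ∈ [0,1) : |x − p/q| < 1/(q²Ψ(q)) for infinitely many (p,q) ∈ ℤ×ℕ}. -/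
/-!
Hausdorff–Cantelli: if `∑ diam (A i) ^ s < ∞`, then for every finite `F` the points lying in
infinitely many `A i` are covered by the `A i` with `i ∉ F`, each of diameter at most
`(∑_{i ∉ F} diam (A i) ^ s) ^ (1 / s)`; these tails tend to `0`, so `H^s` of that set vanishes.

For Jarník, `A (p, q)` is the part of `[0, 1)` within `r q = 1 / (q² Ψ q)` of `p / q`. It has
diameter at most `2 r q`, and once `r q < 1` at most `3 q + 1` numerators `p` give a nonempty set,
so `∑ diam (A (p, q)) ^ s` is dominated by a multiple of the convergent series `∑ q (r q) ^ s`.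
-/

open MeasureTheory Filter Set Metric
open scoped ENNReal Topology

theorem hausdorffMeasure_setOf_infinite_mem_eq_zero {X ι : Type*} [EMetricSpace X]
    [MeasurableSpace X] [BorelSpace X] [Countable ι] {s : ℝ} (hs : 0 < s) (A : ι → Set X)
    (hA : ∑' i, ediam (A i) ^ s ≠ ∞) : μH[s] {x | {i | x ∈ A i}.Infinite} = 0 := by
  set tail : Finset ι → ℝ≥0∞ := fun F => ∑' i : {i // i ∉ F}, ediam (A i) ^ s
  have htail : Tendsto tail atTop (𝓝 0) := ENNReal.tendsto_tsum_compl_atTop_zero hA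
  have hdiam (F : Finset ι) (i : {i // i ∉ F}) : ediam (A i) ≤ tail F ^ s⁻¹ :=
    calc ediam (A i) = (ediam (A i) ^ s) ^ s⁻¹ := by
          rw [← ENNReal.rpow_mul, mul_inv_cancel₀ hs.ne', ENNReal.rpow_one]
      _ ≤ tail F ^ s⁻¹ := ENNReal.rpow_le_rpow (ENNReal.le_tsum i) (inv_nonneg.2 hs.le)
  have hr : Tendsto (fun F => tail F ^ s⁻¹) atTop (𝓝 0) := by
    have h := ((ENNReal.continuous_rpow_const (y := s⁻¹)).tendsto 0).comp htail
    rwa [ENNReal.zero_rpow_of_pos (inv_pos.2 hs)] at h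
  have hcover (F : Finset ι) : {x | {i | x ∈ A i}.Infinite} ⊆ ⋃ i : {i // i ∉ F}, A i := by
    intro x hx
    obtain ⟨i, hxi, hiF⟩ := (hx.sdiff F.finite_toSet).nonempty
    exact mem_iUnion.2 ⟨⟨i, hiF⟩, hxi⟩
  refine le_antisymm ?_ zero_le
  calc μH[s] {x | {i | x ∈ A i}.Infinite}
      ≤ liminf tail atTop := Measure.hausdorffMeasure_le_liminf_tsum s _ _ hr
        (fun F (i : {i // i ∉ F}) => A i) (.of_forall hdiam) (.of_forall hcover)
    _ = 0 := htail.liminf_eq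

def approxSet (r : ℕ → ℝ) (pq : ℤ × ℕ) : Set ℝ :=
  {x ∈ Ico 0 1 | 0 < pq.2 ∧ |x - pq.1 / pq.2| < r pq.2}

section approxSet

variable {r : ℕ → ℝ} {p : ℤ} {q : ℕ}

theorem approxSet_subset_Ioo : approxSet r (p, q) ⊆ Ioo (p / q - r q) (p / q + r q) :=
  fun _ hx => by
    obtain ⟨h₁, h₂⟩ := abs_sub_lt_iff.1 hx.2.2
    constructor <;> linarith

theorem ediam_approxSet_le : ediam (approxSet r (p, q)) ≤ ENNReal.ofReal (2 * r q) :=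
  (ediam_mono approxSet_subset_Ioo).trans_eq (by rw [Real.ediam_Ioo]; ring_nf)

theorem mem_Icc_of_approxSet_nonempty {N : ℕ} (hN : q * r q ≤ N)
    (h : (approxSet r (p, q)).Nonempty) : p ∈ Finset.Icc (-N : ℤ) (q + N) := by
  obtain ⟨x, ⟨hx0, hx1⟩, hq, hx⟩ := h
  have hq' : (0 : ℝ) < q := Nat.cast_pos.2 hq
  obtain ⟨h₁, h₂⟩ := abs_sub_lt_iff.1 hx
  have hlo : -(N : ℝ) < p := by
    have : (x - r q) * q < p := (lt_div_iff₀ hq').1 (by linarith)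
    nlinarith
  have hhi : (p : ℝ) < q + N := by
    have : (p : ℝ) < (x + r q) * q := (div_lt_iff₀ hq').1 (by linarith)
    nlinarith
  rw [Finset.mem_Icc]
  constructor <;> [exact_mod_cast hlo.le; exact_mod_cast hhi.le]

theorem tsum_ediam_approxSet_le {s : ℝ} (hs : 0 < s) (hr : 0 ≤ r q) {N : ℕ}
    (hN : q * r q ≤ N) :
    ∑' p : ℤ, ediam (approxSet r (p, q)) ^ s ≤
      ENNReal.ofReal ((q + 2 * N + 1) * (2 * r q) ^ s) := by
  have hzero : ∀ p ∉ Finset.Icc (-N : ℤ) (q + N), ediam (approxSet r (p, q)) ^ s = 0 := by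
    intro p hp
    have hempty : approxSet r (p, q) = ∅ :=
      not_nonempty_iff_eq_empty.1 fun h => hp (mem_Icc_of_approxSet_nonempty hN h)
    rw [hempty, ediam_empty, ENNReal.zero_rpow_of_pos hs]
  have hcard : (Finset.Icc (-N : ℤ) (q + N)).card = q + 2 * N + 1 := by
    rw [Int.card_Icc]; omega
  calc ∑' p : ℤ, ediam (approxSet r (p, q)) ^ s
      = ∑ p ∈ Finset.Icc (-N : ℤ) (q + N), ediam (approxSet r (p, q)) ^ s := tsum_eq_sum hzero
    _ ≤ (Finset.Icc (-N : ℤ) (q + N)).card • ENNReal.ofReal (2 * r q) ^ s :=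
        Finset.sum_le_card_nsmul _ _ _ fun p _ =>
          ENNReal.rpow_le_rpow ediam_approxSet_le hs.le
    _ = ENNReal.ofReal ((q + 2 * N + 1) * (2 * r q) ^ s) := by
        rw [hcard, nsmul_eq_mul, ENNReal.ofReal_rpow_of_nonneg (by positivity) hs.le,
          ENNReal.ofReal_mul (by positivity)]
        norm_cast

theorem tsum_ediam_approxSet_ne_top {s : ℝ} (hs : 0 < s) (hr : ∀ q, 0 ≤ r q)
    (hsum : Summable fun q : ℕ => q * r q ^ s) :
    ∑' pq, ediam (approxSet r pq) ^ s ≠ ∞ := by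
  set g : ℕ → ℝ := fun q => (q + 2 * ⌈q * r q⌉₊ + 1) * (2 * r q) ^ s
  have hg_nonneg (q : ℕ) : 0 ≤ g q :=
    mul_nonneg (by positivity) (Real.rpow_nonneg (by linarith [hr q]) s)
  have hg : Summable g := by
    refine .of_norm_bounded_eventually_nat (hsum.mul_left (4 * 2 ^ s)) ?_
    filter_upwards [hsum.tendsto_atTop_zero.eventually (gt_mem_nhds one_pos),
      eventually_ge_atTop 1] with q hsmall hq
    have hq' : (1 : ℝ) ≤ q := Nat.one_le_cast.2 hq
    have hr1 : r q ≤ 1 := by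
      by_contra! h
      nlinarith [Real.one_le_rpow h.le hs.le]
    have hceil : (⌈q * r q⌉₊ : ℝ) ≤ q := by
      exact_mod_cast Nat.ceil_le.2 (by nlinarith [hr q])
    have hrs : 0 ≤ r q ^ s := Real.rpow_nonneg (hr q) s
    have h2s : 0 ≤ (2 : ℝ) ^ s := by positivity
    rw [Real.norm_of_nonneg (hg_nonneg q)]
    dsimp only [g]
    rw [Real.mul_rpow zero_le_two (hr q)]
    nlinarith [mul_nonneg h2s hrs]
  refine (lt_of_le_of_lt ?_ (ENNReal.ofReal_lt_top (r := ∑' q, g q))).ne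
  calc ∑' pq, ediam (approxSet r pq) ^ s
      = ∑' q : ℕ, ∑' p : ℤ, ediam (approxSet r (p, q)) ^ s := by
        rw [ENNReal.tsum_prod', ENNReal.tsum_comm]
    _ ≤ ∑' q : ℕ, ENNReal.ofReal (g q) :=
        ENNReal.tsum_le_tsum fun q => tsum_ediam_approxSet_le hs (hr q) (Nat.le_ceil _)
    _ = ENNReal.ofReal (∑' q, g q) := (ENNReal.ofReal_tsum_of_nonneg hg_nonneg hg).symm

end approxSet

theorem jarnik_convergence_general (Ψ : ℝ → ℝ) (hpos : ∀ t, 1 ≤ t → 0 < Ψ t)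
    (s : ℝ) (hs : s ∈ Set.Ioo (0 : ℝ) 1)
    (hconv : Summable (fun t : ℕ => (t : ℝ) * (1 / ((t : ℝ) ^ 2 * Ψ t)) ^ s)) :
    (MeasureTheory.Measure.hausdorffMeasure s : MeasureTheory.Measure ℝ)
      {x ∈ Set.Ico (0 : ℝ) 1 |
        {pq : ℤ × ℕ | 0 < pq.2 ∧
          |x - (pq.1 : ℝ) / pq.2| < 1 / ((pq.2 : ℝ) ^ 2 * Ψ pq.2)}.Infinite} = 0 := by
  set r : ℕ → ℝ := fun q => 1 / ((q : ℝ) ^ 2 * Ψ q)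
  have hr (q : ℕ) : 0 ≤ r q := by
    rcases Nat.eq_zero_or_pos q with rfl | hq
    · simp [r]
    · exact (one_div_pos.2 (mul_pos (by positivity) (hpos q (Nat.one_le_cast.2 hq)))).le
  refine measure_mono_null ?_ (hausdorffMeasure_setOf_infinite_mem_eq_zero hs.1 (approxSet r)
    (tsum_ediam_approxSet_ne_top hs.1 hr hconv))
  rintro x ⟨hx, hinf⟩
  exact hinf.mono fun pq hpq => ⟨hx, hpq⟩

theorem jarnik_convergence (Ψ : ℝ → ℝ) (hpos : ∀ t, 1 ≤ t → 0 < Ψ t)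
    (hmono : ∀ s t : ℝ, 1 ≤ s → s ≤ t → Ψ s ≤ Ψ t)
    (s : ℝ) (hs : s ∈ Set.Ioo (0 : ℝ) 1)
    (hconv : Summable (fun t : ℕ => (t : ℝ) * (1 / ((t : ℝ) ^ 2 * Ψ t)) ^ s)) :
    (MeasureTheory.Measure.hausdorffMeasure s : MeasureTheory.Measure ℝ)
      {x ∈ Set.Ico (0 : ℝ) 1 |
        {pq : ℤ × ℕ | 0 < pq.2 ∧
          |x - (pq.1 : ℝ) / pq.2| < 1 / ((pq.2 : ℝ) ^ 2 * Ψ pq.2)}.Infinite} = 0 :=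
  jarnik_convergence_general Ψ hpos s hs hconv
end

section
/- Fix τ > 0 and positive integers a₁, ..., aₙ. Let Jₙ = ⋃_{(1/4)qₙ^τ ≤ a_{n+1} ≤ (1/2)qₙ^τ} I_{n+1}(a₁,...,aₙ,a_{n+1}). Then, assuming qₙ^τ ≥ 8, we have 1/((3/2)·qₙ^{2+τ}) ≤ |Jₙ| ≤ 1/((1/4)·qₙ^{2+τ}). -/
/-!
The cylinder `I_{n+1}(a₁, …, aₙ, j)` is the image of `(1/(j+1), 1/j]` under the Möbius map
`θ ↦ (pₙ + pₙ₋₁ θ) / (qₙ + qₙ₋₁ θ)`, so up to countably many points the union over `A ≤ j ≤ B` is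
the image of `[1/(B+1), 1/A]`. As `pₙ₋₁ qₙ - pₙ qₙ₋₁ = ±1`, this image is an interval of length
`(B + 1 - A) / ((A qₙ + qₙ₋₁) ((B + 1) qₙ + qₙ₋₁))`. With `A = ⌈qₙ^τ / 4⌉`, `B = ⌊qₙ^τ / 2⌋` and
`qₙ₋₁ ≤ qₙ`, this length lies between `2 / (3 qₙ^(2+τ))` and `4 / qₙ^(2+τ)`.
-/

open Set MeasureTheory Filter

section Continuants

variable (b : ℕ → ℕ)

lemma cfQ_le_cfQ_succ (k : ℕ) (h : 1 ≤ b (k + 1)) : cfQ b k ≤ cfQ b (k + 1) := by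
  cases k with
  | zero => exact h
  | succ k =>
    show cfQ b (k + 1) ≤ b (k + 2) * cfQ b (k + 1) + cfQ b k
    nlinarith

lemma one_le_cfQ : ∀ k, (∀ i, 1 ≤ i → i ≤ k → 1 ≤ b i) → 1 ≤ cfQ b k
  | 0, _ => le_rfl
  | k + 1, hb => (one_le_cfQ k fun i hi hik => hb i hi (by omega)).trans
      (cfQ_le_cfQ_succ b k (hb (k + 1) (by omega) le_rfl))

lemma cfQ_pred_le {n : ℕ} (hn : 1 ≤ n) (hb : ∀ i, 1 ≤ i → i ≤ n → 1 ≤ b i) :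
    cfQ b (n - 1) ≤ cfQ b n := by
  obtain ⟨k, rfl⟩ : ∃ k, n = k + 1 := ⟨n - 1, by omega⟩
  exact cfQ_le_cfQ_succ b k (hb (k + 1) hn le_rfl)

variable {b} (c : ℕ → ℕ)

lemma cfP_congr : ∀ k, (∀ i ≤ k, b i = c i) → cfP b k = cfP c k
  | 0, _ => rfl
  | 1, _ => rfl
  | k + 2, h => by
    rw [cfP, cfP, h (k + 2) le_rfl, cfP_congr (k + 1) fun i hi => h i (by omega),
      cfP_congr k fun i hi => h i (by omega)]

lemma cfQ_congr : ∀ k, (∀ i ≤ k, b i = c i) → cfQ b k = cfQ c k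
  | 0, _ => rfl
  | 1, h => by rw [cfQ, cfQ, h 1 le_rfl]
  | k + 2, h => by
    rw [cfQ, cfQ, h (k + 2) le_rfl, cfQ_congr (k + 1) fun i hi => h i (by omega),
      cfQ_congr k fun i hi => h i (by omega)]

variable (b)

lemma cfP_succ_mul_cfQ_sub : ∀ k,
    (cfP b (k + 1) * cfQ b k - cfP b k * cfQ b (k + 1) : ℤ) = (-1) ^ k
  | 0 => by simp [cfP, cfQ]
  | k + 1 => by
    have ih := cfP_succ_mul_cfQ_sub k
    simp only [cfP, cfQ, Nat.cast_add, Nat.cast_mul] at ih ⊢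
    linear_combination (-1 : ℤ) * ih

end Continuants

section GaussMap

lemma gaussMap_mem_Ico (x : ℝ) : gaussMap x ∈ Ico 0 1 :=
  ⟨Int.fract_nonneg _, Int.fract_lt_one _⟩

lemma inv_natFloor_inv_add_gaussMap {x : ℝ} (hx : 0 ≤ x) :
    ((⌊x⁻¹⌋₊ : ℝ) + gaussMap x)⁻¹ = x := by
  rw [gaussMap, natCast_floor_eq_intCast_floor (inv_nonneg.2 hx), Int.floor_add_fract, inv_inv]

lemma gaussMap_inv_natCast_add (c : ℕ) {θ : ℝ} (hθ : θ ∈ Ico 0 1) :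
    gaussMap (c + θ)⁻¹ = θ := by
  rw [gaussMap, inv_inv, Int.fract_natCast_add, Int.fract_eq_self.2 hθ]

lemma natFloor_inv_inv_natCast_add (c : ℕ) {θ : ℝ} (hθ : θ ∈ Ico 0 1) :
    ⌊((c + θ)⁻¹)⁻¹⌋₊ = c := by
  rw [inv_inv, add_comm, Nat.floor_add_natCast hθ.1, Nat.floor_eq_zero.2 hθ.2, zero_add]

lemma inv_natCast_add_mem_Ioo {c : ℕ} (hc : 1 ≤ c) {θ : ℝ} (hθ : θ ∈ Ioo 0 1) :
    (c + θ)⁻¹ ∈ Ioo 0 1 := by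
  have : (1 : ℝ) ≤ c := by exact_mod_cast hc
  exact ⟨inv_pos.2 (by linarith [hθ.1]), inv_lt_one_of_one_lt₀ (by linarith [hθ.1])⟩

lemma natCast_add_ne_zero {c : ℕ} (hc : 1 ≤ c) {θ : ℝ} (hθ : 0 ≤ θ) : (c : ℝ) + θ ≠ 0 := by
  have : (1 : ℝ) ≤ c := by exact_mod_cast hc
  linarith

lemma gaussMap_iterate_mem_Ico {x : ℝ} (hx : x ∈ Ico 0 1) : ∀ k, gaussMap^[k] x ∈ Ico 0 1
  | 0 => hx
  | k + 1 => by rw [Function.iterate_succ_apply']; exact gaussMap_mem_Ico _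

end GaussMap

-- `cfMap b m θ = [0; b 1, …, b m + θ]`, the inverse branch of `gaussMap^[m]` on `cfCyl b m`.
noncomputable def cfMap (b : ℕ → ℕ) (m : ℕ) (θ : ℝ) : ℝ :=
  (cfP b m + cfP b (m - 1) * θ) / (cfQ b m + cfQ b (m - 1) * θ)

lemma cfMap_one (b : ℕ → ℕ) (θ : ℝ) : cfMap b 1 θ = (b 1 + θ)⁻¹ := by
  simp [cfMap, cfP, cfQ]

lemma cfMap_succ (b : ℕ → ℕ) {m : ℕ} (hm : 1 ≤ m) {θ : ℝ} (h : (b (m + 1) : ℝ) + θ ≠ 0) :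
    cfMap b (m + 1) θ = cfMap b m (b (m + 1) + θ)⁻¹ := by
  obtain ⟨k, rfl⟩ : ∃ k, m = k + 1 := ⟨m - 1, by omega⟩
  simp only [cfMap, Nat.add_sub_cancel, cfP, cfQ, Nat.cast_add, Nat.cast_mul]
  field_simp
  ring

lemma cfMap_congr {b c : ℕ → ℕ} {m : ℕ} (h : ∀ i ≤ m, b i = c i) : cfMap b m = cfMap c m := by
  have h' : ∀ i ≤ m - 1, b i = c i := fun i hi => h i (by omega)
  ext θ
  rw [cfMap, cfMap, cfP_congr c m h, cfQ_congr c m h, cfP_congr c (m - 1) h',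
    cfQ_congr c (m - 1) h']

section Cylinders

variable {b : ℕ → ℕ} {m : ℕ}

lemma cfMap_mem_Ioo (hm : 1 ≤ m) (hb : ∀ i, 1 ≤ i → i ≤ m → 1 ≤ b i) {θ : ℝ}
    (hθ : θ ∈ Ioo 0 1) : cfMap b m θ ∈ Ioo 0 1 := by
  induction m, hm using Nat.le_induction generalizing θ with
  | base => rw [cfMap_one]; exact inv_natCast_add_mem_Ioo (hb 1 le_rfl le_rfl) hθ
  | succ m hm ih =>
    have hc := hb (m + 1) (by omega) le_rfl
    rw [cfMap_succ b hm (natCast_add_ne_zero hc hθ.1.le)]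
    exact ih (fun i hi him => hb i hi (by omega)) (inv_natCast_add_mem_Ioo hc hθ)

lemma gaussMap_iterate_cfMap (hm : 1 ≤ m) (hb : ∀ i, 1 ≤ i → i ≤ m → 1 ≤ b i) {θ : ℝ}
    (hθ : θ ∈ Ioo 0 1) : gaussMap^[m] (cfMap b m θ) = θ := by
  induction m, hm using Nat.le_induction generalizing θ with
  | base =>
    rw [cfMap_one, Function.iterate_one, gaussMap_inv_natCast_add _ (Ioo_subset_Ico_self hθ)]
  | succ m hm ih =>
    have hc := hb (m + 1) (by omega) le_rfl
    rw [cfMap_succ b hm (natCast_add_ne_zero hc hθ.1.le), Function.iterate_succ_apply',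
      ih (fun i hi him => hb i hi (by omega)) (inv_natCast_add_mem_Ioo hc hθ),
      gaussMap_inv_natCast_add _ (Ioo_subset_Ico_self hθ)]

lemma cfA_cfMap (hm : 1 ≤ m) (hb : ∀ i, 1 ≤ i → i ≤ m → 1 ≤ b i) {θ : ℝ}
    (hθ : θ ∈ Ioo 0 1) {i : ℕ} (hi : 1 ≤ i) (him : i ≤ m) : cfA (cfMap b m θ) i = b i := by
  induction m, hm using Nat.le_induction generalizing θ with
  | base =>
    obtain rfl : i = 1 := by omega
    rw [cfA, cfMap_one, Nat.sub_self, Function.iterate_zero_apply,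
      natFloor_inv_inv_natCast_add _ (Ioo_subset_Ico_self hθ)]
  | succ m hm ih =>
    have hc := hb (m + 1) (by omega) le_rfl
    have hb' : ∀ i, 1 ≤ i → i ≤ m → 1 ≤ b i := fun i hi him => hb i hi (by omega)
    have hη := inv_natCast_add_mem_Ioo hc hθ
    rw [cfMap_succ b hm (natCast_add_ne_zero hc hθ.1.le)]
    rcases Nat.lt_or_ge i (m + 1) with hlt | hge
    · exact ih hb' hη (by omega)
    · obtain rfl : i = m + 1 := by omega
      rw [cfA, Nat.add_sub_cancel, gaussMap_iterate_cfMap hm hb' hη,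
        natFloor_inv_inv_natCast_add _ (Ioo_subset_Ico_self hθ)]

lemma cfMap_mem_cfCyl (hm : 1 ≤ m) (hb : ∀ i, 1 ≤ i → i ≤ m → 1 ≤ b i) {θ : ℝ}
    (hθ : θ ∈ Ioo 0 1) : cfMap b m θ ∈ cfCyl b m :=
  ⟨Ioo_subset_Ico_self (cfMap_mem_Ioo hm hb hθ), fun _ hi him => cfA_cfMap hm hb hθ hi him⟩

lemma eq_cfMap_of_mem_cfCyl (hm : 1 ≤ m) (hb : ∀ i, 1 ≤ i → i ≤ m → 1 ≤ b i) {x : ℝ}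
    (hx : x ∈ cfCyl b m) : x = cfMap b m (gaussMap^[m] x) := by
  induction m, hm using Nat.le_induction with
  | base =>
    have h1 : ⌊x⁻¹⌋₊ = b 1 := hx.2 1 le_rfl le_rfl
    rw [cfMap_one, Function.iterate_one, ← h1, inv_natFloor_inv_add_gaussMap hx.1.1]
  | succ m hm ih =>
    set y := gaussMap^[m] x
    have hc : ⌊y⁻¹⌋₊ = b (m + 1) := hx.2 (m + 1) (by omega) le_rfl
    have hy : ((b (m + 1) : ℝ) + gaussMap y)⁻¹ = y := by
      rw [← hc, inv_natFloor_inv_add_gaussMap (gaussMap_iterate_mem_Ico hx.1 m).1]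
    rw [Function.iterate_succ_apply', cfMap_succ b hm
      (natCast_add_ne_zero (hb (m + 1) (by omega) le_rfl) (gaussMap_mem_Ico y).1), hy]
    exact ih (fun i hi him => hb i hi (by omega)) ⟨hx.1, fun i hi him => hx.2 i hi (by omega)⟩

end Cylinders

lemma volume_image_Icc_mobius {p p' q q' v u : ℝ} (hq : 0 < q) (hq' : 0 ≤ q') (hv : 0 ≤ v)
    (hvu : v ≤ u) :
    volume ((fun θ => (p + p' * θ) / (q + q' * θ)) '' Icc v u) =
      ENNReal.ofReal (|p' * q - p * q'| * (u - v) / ((q + q' * v) * (q + q' * u))) := by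
  set f : ℝ → ℝ := fun θ => (p + p' * θ) / (q + q' * θ)
  set d := p' * q - p * q'
  have hD : ∀ θ, 0 ≤ θ → 0 < q + q' * θ := fun θ hθ => by positivity
  have hsub : ∀ s t, 0 ≤ s → 0 ≤ t →
      f t - f s = d * ((t - s) / ((q + q' * s) * (q + q' * t))) := by
    intro s t hs ht
    have := hD s hs
    have := hD t ht
    simp only [f, d]
    field_simp
    ring
  have hfrac : ∀ s t, 0 ≤ s → s ≤ t → 0 ≤ (t - s) / ((q + q' * s) * (q + q' * t)) :=
    fun s t hs hst => div_nonneg (sub_nonneg.2 hst) (mul_pos (hD s hs) (hD t (hs.trans hst))).le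
  -- each `f t - f s` has the sign of `d`, so `f` maps `[v, u]` onto the interval `[[f v, f u]]`
  have himage : f '' Icc v u = uIcc (f v) (f u) := by
    refine Subset.antisymm ?_ ?_
    · rintro _ ⟨θ, ⟨hvθ, hθu⟩, rfl⟩
      have hθ : 0 ≤ θ := hv.trans hvθ
      have h1 := hsub v θ hv hθ
      have h2 := hsub θ u hθ (hθ.trans hθu)
      have hα := hfrac v θ hv hvθ
      have hβ := hfrac θ u hθ hθu
      rcases le_total 0 d with hd | hd
      · exact mem_uIcc.2 (Or.inl ⟨by nlinarith, by nlinarith⟩)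
      · exact mem_uIcc.2 (Or.inr ⟨by nlinarith, by nlinarith⟩)
    · rw [← uIcc_of_le hvu]
      refine intermediate_value_uIcc (ContinuousOn.div (by fun_prop) (by fun_prop) ?_)
      rw [uIcc_of_le hvu]
      exact fun θ hθ => (hD θ (hv.trans hθ.1)).ne'
  rw [himage, Real.volume_interval, hsub v u hv (hv.trans hvu), abs_mul,
    abs_of_nonneg (hfrac v u hv hvu), mul_div_assoc]

section Runs

variable {b : ℕ → ℕ} {n : ℕ}

lemma abs_cfP_pred_mul_cfQ_sub (hn : 1 ≤ n) :
    |(cfP b (n - 1) : ℝ) * cfQ b n - cfP b n * cfQ b (n - 1)| = 1 := by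
  obtain ⟨k, rfl⟩ : ∃ k, n = k + 1 := ⟨n - 1, by omega⟩
  have h : ((cfP b k * cfQ b (k + 1) - cfP b (k + 1) * cfQ b k : ℤ) : ℝ) = -(-1) ^ k := by
    rw [← neg_sub, cfP_succ_mul_cfQ_sub]; push_cast; ring
  push_cast at h
  rw [Nat.add_sub_cancel, h, abs_neg, abs_pow, abs_neg, abs_one, one_pow]

lemma volume_cfMap_image_Icc (hn : 1 ≤ n) (hb : ∀ i, 1 ≤ i → i ≤ n → 1 ≤ b i) {v u : ℝ}
    (hv : 0 ≤ v) (hvu : v ≤ u) :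
    volume (cfMap b n '' Icc v u) = ENNReal.ofReal ((u - v) /
      ((cfQ b n + cfQ b (n - 1) * v) * (cfQ b n + cfQ b (n - 1) * u))) := by
  have hq : (0 : ℝ) < cfQ b n := by exact_mod_cast one_le_cfQ b n hb
  have h := volume_image_Icc_mobius (p := cfP b n) (p' := cfP b (n - 1)) hq
    (Nat.cast_nonneg (cfQ b (n - 1))) hv hvu
  rwa [abs_cfP_pred_mul_cfQ_sub hn, one_mul] at h

lemma cfMap_update_succ (hn : 1 ≤ n) (j : ℕ) {θ : ℝ} (h : (j : ℝ) + θ ≠ 0) :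
    cfMap (Function.update b (n + 1) j) (n + 1) θ = cfMap b n (j + θ)⁻¹ := by
  rw [cfMap_succ _ hn (by rwa [Function.update_self]), Function.update_self,
    cfMap_congr fun i hi => Function.update_of_ne (by omega) _ _]

lemma one_le_update (hb : ∀ i, 1 ≤ i → i ≤ n → 1 ≤ b i) {j : ℕ} (hj : 1 ≤ j) :
    ∀ i, 1 ≤ i → i ≤ n + 1 → 1 ≤ Function.update b (n + 1) j i := by
  intro i hi hin
  rcases eq_or_ne i (n + 1) with rfl | hne
  · rwa [Function.update_self]
  · rw [Function.update_of_ne hne]; exact hb i hi (by omega)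

lemma iUnion_cfCyl_update_subset (hn : 1 ≤ n) (hb : ∀ i, 1 ≤ i → i ≤ n → 1 ≤ b i)
    {A B : ℕ} (hA : 1 ≤ A) :
    ⋃ j ∈ Icc A B, cfCyl (Function.update b (n + 1) j) (n + 1) ⊆
      cfMap b n '' Icc ((B : ℝ) + 1)⁻¹ (A : ℝ)⁻¹ := by
  simp only [iUnion_subset_iff]
  intro j hj x hx
  obtain ⟨hAj, hjB⟩ := hj
  set θ := gaussMap^[n + 1] x
  have hθ : θ ∈ Ico 0 1 := gaussMap_iterate_mem_Ico hx.1 _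
  have hjθ : (A : ℝ) ≤ j + θ ∧ (j : ℝ) + θ ≤ B + 1 := by
    have hAj' : (A : ℝ) ≤ j := by exact_mod_cast hAj
    have hjB' : (j : ℝ) ≤ B := by exact_mod_cast hjB
    constructor <;> linarith [hθ.1, hθ.2]
  have hA0 : (0 : ℝ) < A := by exact_mod_cast hA
  refine ⟨(j + θ)⁻¹, ⟨inv_anti₀ (by linarith) hjθ.2, inv_anti₀ hA0 hjθ.1⟩, ?_⟩
  rw [← cfMap_update_succ hn j (by linarith),
    ← eq_cfMap_of_mem_cfCyl (by omega) (one_le_update hb (hA.trans hAj)) hx]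

lemma cfMap_image_Icc_subset (hn : 1 ≤ n) (hb : ∀ i, 1 ≤ i → i ≤ n → 1 ≤ b i)
    {A B : ℕ} (hA : 1 ≤ A) :
    cfMap b n '' Icc ((B : ℝ) + 1)⁻¹ (A : ℝ)⁻¹ ⊆
      (⋃ j ∈ Icc A B, cfCyl (Function.update b (n + 1) j) (n + 1)) ∪
        cfMap b n '' range fun k : ℕ => (k : ℝ)⁻¹ := by
  rintro _ ⟨θ, ⟨hvθ, hθu⟩, rfl⟩
  have hθ0 : 0 < θ := lt_of_lt_of_le (by positivity) hvθ
  set j := ⌊θ⁻¹⌋₊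
  have hθj : ((j : ℝ) + gaussMap θ)⁻¹ = θ := inv_natFloor_inv_add_gaussMap hθ0.le
  have hθ' := gaussMap_mem_Ico θ
  set θ' := gaussMap θ
  -- `cfMap_mem_cfCyl` needs a positive tail; the exceptional `θ = 1 / j` are countably many
  rcases hθ'.1.eq_or_lt with h0 | hpos
  · exact Or.inr ⟨θ, ⟨j, by rw [← hθj, ← h0, add_zero]⟩, rfl⟩
  have hsum : (j : ℝ) + θ' = θ⁻¹ := by rw [← hθj, inv_inv]
  have hA0 : (0 : ℝ) < A := by exact_mod_cast hA
  have hAj : A ≤ j := Nat.le_floor ((le_inv_comm₀ hθ0 hA0).1 hθu)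
  have hjB : j ≤ B := by
    have : θ⁻¹ ≤ B + 1 := (inv_le_comm₀ (by positivity) hθ0).1 hvθ
    have : (j : ℝ) < B + 1 := by linarith
    have : j < B + 1 := by exact_mod_cast this
    omega
  refine Or.inl (mem_biUnion ⟨hAj, hjB⟩ ?_)
  rw [← hθj, ← cfMap_update_succ hn j (by linarith)]
  exact cfMap_mem_cfCyl (by omega) (one_le_update hb (hA.trans hAj)) ⟨hpos, hθ'.2⟩

lemma volume_iUnion_cfCyl_update (hn : 1 ≤ n) (hb : ∀ i, 1 ≤ i → i ≤ n → 1 ≤ b i)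
    {A B : ℕ} (hA : 1 ≤ A) (hAB : A ≤ B + 1) :
    volume (⋃ j ∈ Icc A B, cfCyl (Function.update b (n + 1) j) (n + 1)) =
      ENNReal.ofReal (((B : ℝ) + 1 - A) /
        ((A * cfQ b n + cfQ b (n - 1)) * ((B + 1) * cfQ b n + cfQ b (n - 1)))) := by
  have hA0 : (0 : ℝ) < A := by exact_mod_cast hA
  have hvu : ((B : ℝ) + 1)⁻¹ ≤ (A : ℝ)⁻¹ := inv_anti₀ hA0 (by exact_mod_cast hAB)
  have hnull : volume (cfMap b n '' range fun k : ℕ => (k : ℝ)⁻¹) = 0 :=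
    ((countable_range _).image _).measure_zero _
  have hvol : volume (⋃ j ∈ Icc A B, cfCyl (Function.update b (n + 1) j) (n + 1)) =
      volume (cfMap b n '' Icc ((B : ℝ) + 1)⁻¹ (A : ℝ)⁻¹) :=
    le_antisymm (measure_mono (iUnion_cfCyl_update_subset hn hb hA))
      ((measure_mono (cfMap_image_Icc_subset hn hb hA)).trans
        ((measure_union_le _ _).trans (by rw [hnull, add_zero])))
  rw [hvol, volume_cfMap_image_Icc hn hb (by positivity) hvu]
  congr 1
  field_simp

end Runs

lemma setOf_le_natCast_and_natCast_le {a c : ℝ} (hc : 0 ≤ c) :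
    {j : ℕ | a ≤ j ∧ (j : ℝ) ≤ c} = Icc ⌈a⌉₊ ⌊c⌋₊ := by
  ext j
  simp only [mem_ofPred_eq, mem_Icc, Nat.ceil_le, Nat.le_floor_iff hc]

lemma two_mul_natCeil_le_natFloor_add_two {X : ℝ} (hX : 0 ≤ X) :
    2 * ⌈(1 / 4) * X⌉₊ ≤ ⌊(1 / 2) * X⌋₊ + 2 := by
  have h1 : (⌈(1 / 4) * X⌉₊ : ℝ) < (1 / 4) * X + 1 := Nat.ceil_lt_add_one (by positivity)
  have h2 : (1 / 2) * X < ⌊(1 / 2) * X⌋₊ + 1 := Nat.lt_floor_add_one _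
  have : ((2 * ⌈(1 / 4) * X⌉₊ : ℕ) : ℝ) < (⌊(1 / 2) * X⌋₊ + 3 : ℕ) := by push_cast; linarith
  have := Nat.cast_lt.1 this
  omega

section RunLength

variable {a β q q' X : ℝ}

lemma one_div_le_run_length (ha : 0 < a) (hβ : 5 ≤ β) (h2a : 2 * a ≤ β + 1)
    (hX : 2 * (β - 1) ≤ X) (hq : 0 < q) (hq' : 0 ≤ q') (hq'q : q' ≤ q) :
    1 / ((3 / 2) * (q ^ 2 * X)) ≤ (β - a) / ((a * q + q') * (β * q + q')) := by
  -- `h2a` comes from integrality: `a < X / 4 + 1` and `X / 2 < β` alone fail for `X` near 8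
  have hβa : β - 1 ≤ 2 * (β - a) := by linarith
  have key : 2 * (a + 1) * (β + 1) ≤ 3 * (β - a) * X := by
    nlinarith [mul_le_mul_of_nonneg_left hX (show 0 ≤ β - a by linarith),
      mul_le_mul_of_nonneg_left hβa (show 0 ≤ β - 1 by linarith)]
  calc 1 / ((3 / 2) * (q ^ 2 * X)) ≤ (β - a) / (((a + 1) * q) * ((β + 1) * q)) := by
        rw [div_le_div_iff₀ (by nlinarith) (by positivity)]
        nlinarith [mul_le_mul_of_nonneg_left key (sq_nonneg q)]
    _ ≤ (β - a) / ((a * q + q') * (β * q + q')) :=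
        div_le_div_of_nonneg_left (by linarith) (by positivity)
          (mul_le_mul (by linarith) (by linarith) (by positivity) (by positivity))

lemma run_length_le_one_div (ha : 0 < a) (haβ : a ≤ β) (hX0 : 0 < X) (hX : X ≤ 4 * a)
    (hq : 0 < q) (hq' : 0 ≤ q') :
    (β - a) / ((a * q + q') * (β * q + q')) ≤ 1 / ((1 / 4) * (q ^ 2 * X)) := by
  have hβ : 0 < β := ha.trans_le haβ
  calc (β - a) / ((a * q + q') * (β * q + q')) ≤ (β - a) / ((a * q) * (β * q)) :=
        div_le_div_of_nonneg_left (by linarith) (by positivity)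
          (mul_le_mul (by linarith) (by linarith) (by positivity) (by positivity))
    _ ≤ 1 / ((1 / 4) * (q ^ 2 * X)) := by
        rw [div_le_div_iff₀ (by positivity) (by positivity)]
        nlinarith [mul_le_mul_of_nonneg_left hX hβ.le, mul_pos ha hX0, sq_nonneg q,
          mul_le_mul_of_nonneg_left (show β * X ≤ 4 * a * β by nlinarith) (sq_nonneg q)]

end RunLength

theorem fundamental_interval_length_tau_general (τ : ℝ) (b : ℕ → ℕ) (n : ℕ)
    (hn : 1 ≤ n) (hb : ∀ i, 1 ≤ i → i ≤ n → 1 ≤ b i)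
    (hq : 8 ≤ (cfQ b n : ℝ) ^ τ) :
    ENNReal.ofReal (1 / ((3 / 2) * (cfQ b n : ℝ) ^ (2 + τ))) ≤
      MeasureTheory.volume
        (⋃ j ∈ {j : ℕ | (1 / 4) * (cfQ b n : ℝ) ^ τ ≤ (j : ℝ) ∧
            (j : ℝ) ≤ (1 / 2) * (cfQ b n : ℝ) ^ τ},
          cfCyl (Function.update b (n + 1) j) (n + 1)) ∧
    MeasureTheory.volume
        (⋃ j ∈ {j : ℕ | (1 / 4) * (cfQ b n : ℝ) ^ τ ≤ (j : ℝ) ∧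
            (j : ℝ) ≤ (1 / 2) * (cfQ b n : ℝ) ^ τ},
          cfCyl (Function.update b (n + 1) j) (n + 1)) ≤
      ENNReal.ofReal (1 / ((1 / 4) * (cfQ b n : ℝ) ^ (2 + τ))) := by
  set X := (cfQ b n : ℝ) ^ τ
  set A := ⌈(1 / 4) * X⌉₊
  set B := ⌊(1 / 2) * X⌋₊
  have hX : 0 < X := by linarith
  have hqpos : (0 : ℝ) < cfQ b n := by exact_mod_cast one_le_cfQ b n hb
  have hA : 1 ≤ A := Nat.ceil_pos.2 (by positivity)
  have h2A : 2 * A ≤ B + 2 := two_mul_natCeil_le_natFloor_add_two hX.le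
  have hB : 4 ≤ B := Nat.le_floor (by norm_num; linarith)
  have hpow : (cfQ b n : ℝ) ^ (2 + τ) = (cfQ b n : ℝ) ^ 2 * X := by
    rw [Real.rpow_add hqpos, Real.rpow_two]
  rw [setOf_le_natCast_and_natCast_le (by positivity),
    volume_iUnion_cfCyl_update hn hb hA (by omega), hpow]
  have hA' : (1 : ℝ) ≤ A := by exact_mod_cast hA
  have hB' : (4 : ℝ) ≤ B := by exact_mod_cast hB
  have h2A' : 2 * (A : ℝ) ≤ B + 1 + 1 := by exact_mod_cast (by omega : 2 * A ≤ B + 1 + 1)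
  refine ⟨ENNReal.ofReal_le_ofReal (one_div_le_run_length (by positivity) (by linarith) h2A'
      (by linarith [Nat.floor_le (show 0 ≤ (1 / 2) * X by positivity)]) hqpos (by positivity)
      (by exact_mod_cast cfQ_pred_le b hn hb)),
    ENNReal.ofReal_le_ofReal (run_length_le_one_div (by positivity) (by linarith) hX
      (by linarith [Nat.le_ceil ((1 / 4) * X)]) hqpos (by positivity))⟩

theorem fundamental_interval_length_tau (τ : ℝ) (hτ : 0 < τ) (b : ℕ → ℕ) (n : ℕ)
    (hn : 1 ≤ n) (hb : ∀ i, 1 ≤ i → i ≤ n → 1 ≤ b i)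
    (hq : 8 ≤ (cfQ b n : ℝ) ^ τ) :
    ENNReal.ofReal (1 / ((3 / 2) * (cfQ b n : ℝ) ^ (2 + τ))) ≤
      MeasureTheory.volume
        (⋃ j ∈ {j : ℕ | (1 / 4) * (cfQ b n : ℝ) ^ τ ≤ (j : ℝ) ∧
            (j : ℝ) ≤ (1 / 2) * (cfQ b n : ℝ) ^ τ},
          cfCyl (Function.update b (n + 1) j) (n + 1)) ∧
    MeasureTheory.volume
        (⋃ j ∈ {j : ℕ | (1 / 4) * (cfQ b n : ℝ) ^ τ ≤ (j : ℝ) ∧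
            (j : ℝ) ≤ (1 / 2) * (cfQ b n : ℝ) ^ τ},
          cfCyl (Function.update b (n + 1) j) (n + 1)) ≤
      ENNReal.ofReal (1 / ((1 / 4) * (cfQ b n : ℝ) ^ (2 + τ))) :=
  fundamental_interval_length_tau_general τ b n hn hb hq
end

section
/- Let ε > 0 and let x ∈ (0,1) be irrational and not badly approximable (i.e., liminf_{q→∞} q·‖qx‖ = 0, where ‖·‖ is distance to the nearest integer). Then x does not belong to D((1−ε)/t), i.e., there exist arbitrarily large t for which the system |qx − p| < (1−ε)/t, 1 ≤ q < t has no integer solution. -/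
/-!
Take a very good approximation `q x ≈ p` in lowest terms, with `q ‖q x‖ ≤ ε`, and put
`t = (1 - ε) / |q x - p|`. A solution `(p', q')` with `q' < t` and `|q' x - p'| < |q x - p|`
cannot be a multiple of `(p, q)`, so the determinant `q p' - q' p` is a nonzero integer; but
`|q p' - q' p| ≤ q' |q x - p| + q |q' x - p'| < (1 - ε) + q ‖q x‖ ≤ 1`.
-/

open Filter

/-- Without this coboundedness, a `liminf` equal to `0` could be the junk value of a sequence
tending to `∞`. -/
lemma Irrational.frequently_mul_abs_sub_round_le_one {x : ℝ} (hx : Irrational x) :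
    ∃ᶠ q : ℕ in atTop, (q : ℝ) * |(q : ℝ) * x - round ((q : ℝ) * x)| ≤ 1 := by
  refine frequently_atTop.2 fun m => ?_
  obtain ⟨η, hη, hηlt⟩ : ∃ η : ℝ, 0 < η ∧
      ∀ k ∈ Finset.Ico 1 m, η < |(k : ℝ) * x - round ((k : ℝ) * x)| := by
    have h : ∀ᶠ η in nhdsWithin (0 : ℝ) (Set.Ioi 0),
        ∀ k ∈ Finset.Ico 1 m, η < |(k : ℝ) * x - round ((k : ℝ) * x)| := by
      refine (eventually_all_finset _).2 fun k hk => nhdsWithin_le_nhds (eventually_lt_nhds ?_)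
      have hk : k ≠ 0 := by simp at hk; omega
      exact abs_pos.2 (sub_ne_zero.2 ((hx.natCast_mul hk).ne_int _))
    exact (h.and self_mem_nhdsWithin).exists.imp fun η h => ⟨h.2, h.1⟩
  obtain ⟨n, hn⟩ := exists_nat_one_div_lt hη
  obtain ⟨k, hk0, hkn, hk⟩ := Real.exists_nat_abs_mul_sub_round_le x n.succ_pos
  refine ⟨k, ?_, ?_⟩
  · by_contra! hkm
    have hle : (1 : ℝ) / ((n.succ : ℕ) + 1) ≤ 1 / (n + 1) := by gcongr; simp
    exact (hηlt k (Finset.mem_Ico.2 ⟨hk0, hkm⟩)).not_ge (hk.trans (hle.trans hn.le))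
  · calc (k : ℝ) * |(k : ℝ) * x - round ((k : ℝ) * x)| ≤ (n.succ : ℝ) * (1 / ((n.succ : ℕ) + 1)) :=
          mul_le_mul (by exact_mod_cast hkn) hk (abs_nonneg _) (by positivity)
      _ ≤ 1 := by rw [mul_one_div, div_le_one (by positivity)]; linarith

lemma exists_mul_abs_sub_round_lt_of_liminf_eq_zero {x : ℝ} (hx : Irrational x)
    (hlim : liminf (fun q : ℕ => (q : ℝ) * |(q : ℝ) * x - round ((q : ℝ) * x)|) atTop = 0)
    {δ : ℝ} (hδ : 0 < δ) :
    ∃ q : ℕ, 1 ≤ q ∧ (q : ℝ) * |(q : ℝ) * x - round ((q : ℝ) * x)| < δ :=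
  frequently_atTop.1 (frequently_lt_of_liminf_lt
    (IsCoboundedUnder.of_frequently_le hx.frequently_mul_abs_sub_round_le_one) (hlim ▸ hδ)) 1

lemma exists_isCoprime_mul_abs_sub_le (x : ℝ) {Q P : ℤ} (hQ : 0 < Q) :
    ∃ q p : ℤ, 0 < q ∧ IsCoprime q p ∧ (q : ℝ) * |q * x - p| ≤ Q * |Q * x - P| := by
  obtain ⟨g, q, p, hg, hcop, rfl, rfl⟩ := Int.exists_gcd_one' (Int.gcd_pos_of_ne_zero_left P hQ.ne')
  have hq : 0 < q := pos_of_mul_pos_left hQ (by positivity)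
  refine ⟨q, p, hq, Int.isCoprime_iff_gcd_eq_one.2 hcop, ?_⟩
  have hg1 : (1 : ℝ) ≤ g := by exact_mod_cast hg
  have hqR : (0 : ℝ) ≤ q := by exact_mod_cast hq.le
  calc (q : ℝ) * |q * x - p| ≤ ((g : ℝ) * g) * ((q : ℝ) * |q * x - p|) :=
        le_mul_of_one_le_left (by positivity) (by nlinarith)
    _ = ((q * g : ℤ) : ℝ) * |((q * g : ℤ) : ℝ) * x - ((p * g : ℤ) : ℝ)| := by
        push_cast
        rw [show (q : ℝ) * g * x - p * g = g * (q * x - p) by ring, abs_mul,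
          abs_of_nonneg (by positivity : (0 : ℝ) ≤ g)]
        ring

/-- The determinant inequality: a strictly better approximation than the reduced one
`(p, q)` is not proportional to it. -/
lemma one_le_mul_abs_sub_add_mul_abs_sub {x : ℝ} {q p q' p' : ℤ} (hq : 0 < q)
    (hcop : IsCoprime q p) (hq' : 0 < q') (hbetter : |q' * x - p'| < |q * x - p|) :
    1 ≤ q' * |q * x - p| + q * |q' * x - p'| := by
  have hdet : q * p' - q' * p ≠ 0 := by
    intro h0
    obtain ⟨k, rfl⟩ : q ∣ q' := hcop.dvd_of_dvd_mul_right ⟨p', by linarith⟩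
    have hp' : p' = k * p := mul_left_cancel₀ hq.ne' (by linarith)
    have hk : (1 : ℝ) ≤ k := by exact_mod_cast (pos_of_mul_pos_right hq' hq.le)
    subst hp'
    have : |((q * k : ℤ) : ℝ) * x - ((k * p : ℤ) : ℝ)| = k * |q * x - p| := by
      push_cast
      rw [show (q : ℝ) * k * x - k * p = k * (q * x - p) by ring, abs_mul,
        abs_of_nonneg (by linarith)]
    nlinarith [abs_nonneg ((q : ℝ) * x - p)]
  calc (1 : ℝ) ≤ |((q * p' - q' * p : ℤ) : ℝ)| := by exact_mod_cast Int.one_le_abs hdet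
    _ = |q' * (q * x - p) - q * (q' * x - p')| := by push_cast; ring_nf
    _ ≤ |q' * (q * x - p)| + |q * (q' * x - p')| := abs_sub _ _
    _ = q' * |q * x - p| + q * |q' * x - p'| := by
        rw [abs_mul, abs_mul, abs_of_pos (Int.cast_pos.2 hq'), abs_of_pos (Int.cast_pos.2 hq)]

lemma not_exists_abs_sub_lt_of_mul_abs_sub_le {x ε : ℝ} {q p : ℤ} (hq : 0 < q)
    (hcop : IsCoprime q p) (hsmall : q * |q * x - p| ≤ ε) :
    ¬ ∃ p' q' : ℤ, 1 ≤ q' ∧ (q' : ℝ) < (1 - ε) / |q * x - p| ∧ |q' * x - p'| < |q * x - p| := by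
  rintro ⟨p', q', hq'1, hq't, hbetter⟩
  have hα : 0 < |(q : ℝ) * x - p| := (abs_nonneg _).trans_lt hbetter
  have hdet := one_le_mul_abs_sub_add_mul_abs_sub hq hcop hq'1 hbetter
  have hq'α : q' * |(q : ℝ) * x - p| < 1 - ε := (lt_div_iff₀ hα).1 hq't
  have : (q : ℝ) * |q' * x - p'| ≤ q * |q * x - p| :=
    mul_le_mul_of_nonneg_left hbetter.le (by exact_mod_cast hq.le)
  linarith

theorem davenport_schmidt_general (ε : ℝ) (hε : 0 < ε) (x : ℝ)
    (hirr : Irrational x)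
    (hba : Filter.liminf (fun q : ℕ => (q : ℝ) * |(q : ℝ) * x - round ((q : ℝ) * x)|)
      Filter.atTop = 0) :
    ∀ N : ℝ, ∃ t : ℝ, N < t ∧
      ¬ ∃ p q : ℤ, 1 ≤ q ∧ (q : ℝ) < t ∧ |(q : ℝ) * x - p| < (1 - ε) / t := by
  intro N
  set ε' := min ε (1 / 2)
  have hε'0 : 0 < ε' := lt_min hε one_half_pos
  have hε'1 : 1 / 2 ≤ 1 - ε' := by linarith [min_le_right ε (1 / 2)]
  obtain ⟨Q, hQ, hQδ⟩ := exists_mul_abs_sub_round_lt_of_liminf_eq_zero hirr hba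
    (lt_min hε'0 (by positivity : 0 < (1 - ε') / (|N| + 1)))
  obtain ⟨q, p, hq, hcop, hqp⟩ :=
    exists_isCoprime_mul_abs_sub_le x (P := round ((Q : ℝ) * x)) (by omega : 0 < (Q : ℤ))
  push_cast at hqp
  have hsmall := hqp.trans_lt hQδ
  have hα : 0 < |(q : ℝ) * x - p| :=
    abs_pos.2 (sub_ne_zero.2 ((hirr.intCast_mul hq.ne').ne_int p))
  refine ⟨(1 - ε') / |(q : ℝ) * x - p|, ?_, ?_⟩
  · have hαN : |(q : ℝ) * x - p| < (1 - ε') / (|N| + 1) :=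
      (le_mul_of_one_le_left hα.le (by exact_mod_cast hq)).trans_lt
        (hsmall.trans_le (min_le_right _ _))
    rw [lt_div_iff₀ (by positivity), ← lt_div_iff₀' hα] at hαN
    linarith [le_abs_self N]
  · rintro ⟨p', q', hq'1, hq't, herr⟩
    refine not_exists_abs_sub_lt_of_mul_abs_sub_le hq hcop
      (hsmall.le.trans (min_le_left _ _)) ⟨p', q', hq'1, hq't, herr.trans_le ?_⟩
    calc (1 - ε) / ((1 - ε') / |(q : ℝ) * x - p|)
        ≤ (1 - ε') / ((1 - ε') / |(q : ℝ) * x - p|) := by gcongr; exact min_le_left _ _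
      _ = |(q : ℝ) * x - p| := div_div_cancel₀ (by linarith)

theorem davenport_schmidt (ε : ℝ) (hε : 0 < ε) (x : ℝ) (hx : x ∈ Set.Ioo (0 : ℝ) 1)
    (hirr : Irrational x)
    (hba : Filter.liminf (fun q : ℕ => (q : ℝ) * |(q : ℝ) * x - round ((q : ℝ) * x)|)
      Filter.atTop = 0) :
    ∀ N : ℝ, ∃ t : ℝ, N < t ∧
      ¬ ∃ p q : ℤ, 1 ≤ q ∧ (q : ℝ) < t ∧ |(q : ℝ) * x - p| < (1 - ε) / t :=
  davenport_schmidt_general ε hε x hirr hba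
end
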